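/- arXiv:1604.05640 — 5 statements merged into one kernel-verified Lean document; each statement's English description precedes it below -/
import Mathlib

section
/- Let A_# = (f_#, γ_#, n_#) be a common supporting grid for a set of sampling grids {A_j = (f_j, γ_j, n_j)}_{j=1}^m, i.e. for each j and each k_j ∈ {0,...,n_j−1} there exists k_# ∈ {0,...,n_#−1} with (k_j − γ_j)/f_j = (k_# − γ_#)/f_#. If each grid A_j has at least two samples (n_j ≥ 2), then for each j there exists a positive integer l_j and an integer a_j such that f_# = l_j f_j and γ_# = l_j γ_j − a_j. -/
/-- if `(f#, γ#, n#)` is a common supporting grid for the grids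
`(f j, γ j, n j)` (each with at least two samples), then for each `j` there are
a positive integer `l` and an integer `a` with `f# = l * f j` and `γ# = l * γ j - a`. -/
theorem common_grid_necessary_conditions
    (m : ℕ) (f γ : Fin m → ℝ) (n : Fin m → ℕ)
    (fs γs : ℝ) (ns : ℕ)
    (hf : ∀ j, 0 < f j) (hfs : 0 < fs)
    (hn : ∀ j, 2 ≤ n j)
    (hsub : ∀ j, ∀ k, k < n j →
      ∃ ks, ks < ns ∧ ((k : ℝ) - γ j) / f j = ((ks : ℝ) - γs) / fs) :
    ∀ j, ∃ l : ℕ, 0 < l ∧ ∃ a : ℤ,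
      fs = (l : ℝ) * f j ∧ γs = (l : ℝ) * γ j - (a : ℝ) := by
  intro j
  obtain ⟨k0, _, h0⟩ := hsub j 0 (by have := hn j; omega)
  obtain ⟨k1, _, h1⟩ := hsub j 1 (by have := hn j; omega)
  have hfj := hf j
  have hfj' := hfj.ne'
  have hfs' := hfs.ne'
  push_cast at h0 h1
  rw [div_eq_div_iff hfj' hfs'] at h0 h1
  -- fs = (k1 - k0) * f j
  have hkey : fs = ((k1 : ℝ) - (k0 : ℝ)) * f j := by nlinarith [h0, h1]
  have hlt : k0 < k1 := by
    by_contra h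
    push_neg at h
    have : (k1 : ℝ) - (k0 : ℝ) ≤ 0 := by
      have : (k1 : ℝ) ≤ (k0 : ℝ) := by exact_mod_cast h
      linarith
    nlinarith
  refine ⟨k1 - k0, by omega, -(k0 : ℤ), ?_, ?_⟩
  · rw [hkey]; congr 1; push_cast [Nat.cast_sub hlt.le]; ring
  · have hcast : ((k1 - k0 : ℕ) : ℝ) = (k1 : ℝ) - (k0 : ℝ) := by
      push_cast [Nat.cast_sub hlt.le]; ring
    rw [hcast]
    -- from h0: (0 - γ j) * fs = (k0 - γs) * f j
    have h2 : γs * f j = (k0 : ℝ) * f j + γ j * fs := by nlinarith [h0]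
    have h3 : γs * f j = (((k1 : ℝ) - k0) * γ j + k0) * f j := by
      rw [hkey] at h2; linear_combination h2
    have h4 := mul_right_cancel₀ hfj' h3
    push_cast
    linarith
end

section
/- Conversely, if there exist f_# > 0, γ_# ∈ ℝ, positive integers l_1,...,l_m and integers a_1,...,a_m with f_# = l_j f_j and γ_# = l_j γ_j − a_j for all j, and additionally a_j ≤ 0 ≤ l_j (n_j − 1) − a_j for all j, then A_# = (f_#, γ_#, n_#) with n_# = max_j {l_j(n_j − 1) − a_j} + 1 is a common supporting grid for {A_j}_{j=1}^m. -/
/-- converse direction. If `f# = l j * f j`, `γ# = l j * γ j - a j` with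
`l j` positive integers, `a j ≤ 0 ≤ l j * (n j - 1) - a j`, then the grid with
`n# = max_j (l j * (n j - 1) - a j) + 1` samples is a common supporting grid:
every sample time of every grid `A j` is a sample time of the grid `A#`. -/
theorem common_grid_sufficient_conditions
    (m : ℕ) (hm : 0 < m) (f γ : Fin m → ℝ) (n : Fin m → ℕ)
    (fs γs : ℝ) (l : Fin m → ℕ) (a : Fin m → ℤ)
    (hf : ∀ j, 0 < f j) (hfs : 0 < fs)
    (hl : ∀ j, 0 < l j)
    (hfl : ∀ j, fs = (l j : ℝ) * f j)
    (hγl : ∀ j, γs = (l j : ℝ) * γ j - (a j : ℝ))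
    (ha : ∀ j, a j ≤ 0 ∧ 0 ≤ (l j : ℤ) * ((n j : ℤ) - 1) - a j)
    (ns : ℤ)
    (hns : ns = (Finset.univ.sup'
        (Finset.univ_nonempty_iff.mpr (Fin.pos_iff_nonempty.mp hm))
        fun j => (l j : ℤ) * ((n j : ℤ) - 1) - a j) + 1) :
    ∀ j, ∀ k, k < n j →
      ∃ ks : ℤ, 0 ≤ ks ∧ ks < ns ∧
        ((k : ℝ) - γ j) / f j = ((ks : ℝ) - γs) / fs := by
  intro j k hk
  refine ⟨(l j : ℤ) * k - a j, ?_, ?_, ?_⟩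
  · have h1 := (ha j).1
    have : (0:ℤ) ≤ (l j : ℤ) * k := by positivity
    omega
  · have h2 : (l j : ℤ) * k - a j ≤ (l j : ℤ) * ((n j : ℤ) - 1) - a j := by
      have : (k : ℤ) ≤ (n j : ℤ) - 1 := by omega
      nlinarith [Int.ofNat_le.mpr (hl j).le]
    have h3 := Finset.le_sup' (s := (Finset.univ : Finset (Fin m)))
      (fun j => (l j : ℤ) * ((n j : ℤ) - 1) - a j) (Finset.mem_univ j)
    omega
  · have hfj := (hf j).ne'
    have hlj : (0:ℝ) < (l j : ℝ) := by exact_mod_cast hl j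
    rw [hfl j, hγl j]
    push_cast
    field_simp
    ring
end

section
/- Let I ⊆ {0,...,n} and C_I ∈ {0,1}^{(n+1)×|I|} the selection matrix whose columns are the canonical basis vectors e_i for i ∈ I. A trigonometric polynomial R(z) = Σ_{k=−n}^{n} r_k z^{−k} admits a compact Gram representation on C_I (i.e. there exists G_M ∈ ℂ^{|I|×|I|} with R(z) = ψ(z^{−1})^T C_I G_M C_I^T ψ(z) for all z ≠ 0) if and only if the monomial support of R is contained in the difference set I − I = {i − i' : i, i' ∈ I}. -/
open Complex Matrix Finset

private lemma dot_eq_aux (n N : ℕ) (e : Fin N → Fin (n + 1))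
    (G : Matrix (Fin N) (Fin N) ℂ) (z : ℂ) (hz : z ≠ 0) :
    (fun j : Fin N => (z⁻¹) ^ ((e j : ℕ))) ⬝ᵥ G.mulVec (fun j : Fin N => z ^ ((e j : ℕ)))
      = ∑ i : Fin N, ∑ j : Fin N, G i j * z ^ (((e j : ℕ) : ℤ) - ((e i : ℕ) : ℤ)) := by
  simp only [dotProduct, mulVec, Finset.mul_sum]
  refine Finset.sum_congr rfl fun i _ => Finset.sum_congr rfl fun j _ => ?_
  rw [zpow_sub₀ hz, zpow_natCast, zpow_natCast, inv_pow]
  ring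

/-- a trigonometric polynomial `R(z) = Σ_{k=-n}^n r_k z^{-k}` admits a
compact Gram representation on the selection matrix `C_I` of `I = {e 0 < ... < e (N-1)}`,
i.e. `R(z) = φ(z⁻¹)ᵀ G φ(z)` with `φ(z) = C_Iᵀ ψ(z)`, iff the monomial support of `R`
is contained in the difference set `I - I`. -/
theorem compact_gram_representation_iff_support
    (n N : ℕ) (e : Fin N → Fin (n + 1)) (he : StrictMono e)
    (r : ℤ → ℂ) :
    (∃ G : Matrix (Fin N) (Fin N) ℂ, ∀ z : ℂ, z ≠ 0 →
        (∑ k ∈ Finset.Icc (-(n : ℤ)) (n : ℤ), r k * z ^ (-k))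
          = (fun j : Fin N => (z⁻¹) ^ ((e j : ℕ))) ⬝ᵥ
              G.mulVec (fun j : Fin N => z ^ ((e j : ℕ))))
    ↔ (∀ k ∈ Finset.Icc (-(n : ℤ)) (n : ℤ), r k ≠ 0 →
        ∃ i i' : Fin N, ((e i : ℕ) : ℤ) - ((e i' : ℕ) : ℤ) = k) := by
  have hle : ∀ i : Fin N, (e i : ℕ) ≤ n := fun i => Nat.lt_succ_iff.mp (e i).isLt
  constructor
  · rintro ⟨G, hG⟩ k hk hr
    by_contra hno
    push_neg at hno
    rw [Finset.mem_Icc] at hk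
    set P : Polynomial ℂ :=
      ∑ k' ∈ Finset.Icc (-(n : ℤ)) (n : ℤ),
        Polynomial.C (r k') * Polynomial.X ^ ((n : ℤ) - k').toNat with hP
    set Q : Polynomial ℂ :=
      ∑ i : Fin N, ∑ j : Fin N,
        Polynomial.C (G i j) * Polynomial.X ^ ((n - (e i : ℕ)) + (e j : ℕ)) with hQ
    have hPQ : P = Q := by
      apply Polynomial.eq_of_infinite_eval_eq
      apply Set.Infinite.mono (s := {(0 : ℂ)}ᶜ)
      · intro z hz
        have hz : z ≠ 0 := hz
        have hevP : P.eval z = z ^ n * ∑ k' ∈ Finset.Icc (-(n : ℤ)) (n : ℤ), r k' * z ^ (-k') := by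
          rw [hP, Polynomial.eval_finset_sum, Finset.mul_sum]
          refine Finset.sum_congr rfl fun k' hk' => ?_
          rw [Finset.mem_Icc] at hk'
          have h1 : (((n : ℤ) - k').toNat : ℤ) = (n : ℤ) - k' := by omega
          have : z ^ ((n : ℤ) - k').toNat = z ^ ((n : ℤ) - k') := by
            rw [← zpow_natCast, h1]
          rw [Polynomial.eval_mul, Polynomial.eval_C, Polynomial.eval_pow,
            Polynomial.eval_X, this, sub_eq_add_neg, zpow_add₀ hz, zpow_natCast]
          ring
        have hevQ : Q.eval z = z ^ n *
            ((fun j : Fin N => (z⁻¹) ^ ((e j : ℕ))) ⬝ᵥ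
              G.mulVec (fun j : Fin N => z ^ ((e j : ℕ)))) := by
          rw [hQ, dot_eq_aux n N e G z hz, Polynomial.eval_finset_sum, Finset.mul_sum]
          refine Finset.sum_congr rfl fun i _ => ?_
          rw [Polynomial.eval_finset_sum, Finset.mul_sum]
          refine Finset.sum_congr rfl fun j _ => ?_
          have h1 : (((n - (e i : ℕ)) + (e j : ℕ) : ℕ) : ℤ)
              = (n : ℤ) + (((e j : ℕ) : ℤ) - ((e i : ℕ) : ℤ)) := by
            have := hle i; omega
          have : z ^ ((n - (e i : ℕ)) + (e j : ℕ))
              = z ^ (n : ℤ) * z ^ (((e j : ℕ) : ℤ) - ((e i : ℕ) : ℤ)) := by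
            rw [← zpow_natCast, h1, zpow_add₀ hz]
          simp only [Polynomial.eval_mul, Polynomial.eval_C, Polynomial.eval_pow,
            Polynomial.eval_X, this, zpow_natCast]
          ring
        simp only [Set.mem_setOf_eq, hevP, hevQ, hG z hz]
      · exact Set.Finite.infinite_compl (Set.finite_singleton 0)
    set m₀ : ℕ := ((n : ℤ) - k).toNat with hm₀
    have hcP : P.coeff m₀ = r k := by
      rw [hP, Polynomial.finset_sum_coeff]
      rw [Finset.sum_eq_single k]
      · simp [Polynomial.coeff_C_mul, Polynomial.coeff_X_pow]
        exact fun h => absurd hm₀ h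
      · intro k' hk' hne
        rw [Finset.mem_Icc] at hk'
        have : m₀ ≠ ((n : ℤ) - k').toNat := by omega
        simp [Polynomial.coeff_C_mul, Polynomial.coeff_X_pow, this]
      · intro h; exact absurd (Finset.mem_Icc.mpr hk) h
    have hcQ : Q.coeff m₀ = 0 := by
      rw [hQ, Polynomial.finset_sum_coeff]
      refine Finset.sum_eq_zero fun i _ => ?_
      rw [Polynomial.finset_sum_coeff]
      refine Finset.sum_eq_zero fun j _ => ?_
      have : m₀ ≠ (n - (e i : ℕ)) + (e j : ℕ) := by
        intro hEq
        apply hno i j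
        have := hle i
        omega
      simp [Polynomial.coeff_C_mul, Polynomial.coeff_X_pow, this]
    rw [hPQ, hcQ] at hcP
    exact hr hcP.symm
  · intro h
    classical
    -- choice of a representative pair for each difference
    let c : ℤ → Option (Fin N × Fin N) := fun k =>
      if hk : ∃ p : Fin N × Fin N, ((e p.1 : ℕ) : ℤ) - ((e p.2 : ℕ) : ℤ) = k
      then some hk.choose else none
    let G : Matrix (Fin N) (Fin N) ℂ := fun i j =>
      if c (((e i : ℕ) : ℤ) - ((e j : ℕ) : ℤ)) = some (i, j)
      then r (((e i : ℕ) : ℤ) - ((e j : ℕ) : ℤ)) else 0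
    refine ⟨G, fun z hz => ?_⟩
    rw [dot_eq_aux n N e G z hz]
    rw [← Finset.sum_product']
    rw [Finset.univ_product_univ]
    have hmaps : ∀ p : Fin N × Fin N, p ∈ (Finset.univ : Finset (Fin N × Fin N)) →
        ((e p.1 : ℕ) : ℤ) - ((e p.2 : ℕ) : ℤ) ∈ Finset.Icc (-(n : ℤ)) (n : ℤ) := by
      intro p _
      rw [Finset.mem_Icc]
      have := hle p.1; have := hle p.2
      constructor <;> [skip; skip] <;> omega
    rw [← Finset.sum_fiberwise_of_maps_to hmaps
      (fun p => G p.1 p.2 * z ^ (((e p.2 : ℕ) : ℤ) - ((e p.1 : ℕ) : ℤ)))]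
    refine Finset.sum_congr rfl fun k hk => ?_
    by_cases hex : ∃ p : Fin N × Fin N, ((e p.1 : ℕ) : ℤ) - ((e p.2 : ℕ) : ℤ) = k
    · have hc : c k = some hex.choose := dif_pos hex
      set q := hex.choose with hq
      have hqd : ((e q.1 : ℕ) : ℤ) - ((e q.2 : ℕ) : ℤ) = k := hex.choose_spec
      rw [Finset.sum_eq_single q]
      · have hGq : G q.1 q.2 = r k := by
          simp [G, hqd, hc]
        rw [hGq, show ((e q.2 : ℕ) : ℤ) - ((e q.1 : ℕ) : ℤ) = -k by omega]
      · intro p hp hne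
        rw [Finset.mem_filter] at hp
        have hG0 : G p.1 p.2 = 0 := by
          simp only [G, hp.2, hc]
          rw [if_neg]
          intro hcontra
          exact hne ((Option.some_injective _ hcontra).symm ▸ rfl)
        rw [hG0, zero_mul]
      · intro hq'
        exact absurd (Finset.mem_filter.mpr ⟨Finset.mem_univ q, hqd⟩) hq'
    · have hcn : c k = none := dif_neg hex
      have hr0 : r k = 0 := by
        by_contra hr
        obtain ⟨i, i', hi⟩ := h k hk hr
        exact hex ⟨(i, i'), hi⟩
      rw [hr0, zero_mul]
      refine (Finset.sum_eq_zero fun p hp => ?_).symm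
      rw [Finset.mem_filter] at hp
      have hG0 : G p.1 p.2 = 0 := by
        simp [G, hp.2, hcn]
      rw [hG0, zero_mul]
end

section
/- Let Q(z) = Σ_{k=0}^n q_k z^k be a complex polynomial with coefficient vector q ∈ ℂ^{n+1}. Suppose there exists a Hermitian matrix H ∈ ℂ^{(n+1)×(n+1)} with [[H, q],[q^H, 1]] ⪰ 0 and tr(Θ_k H) = δ_{k,0} for all k ∈ {0,...,n} (i.e. the diagonal sums of H equal 1 for the main diagonal and 0 for all other diagonals). Then |Q(e^{iω})| ≤ 1 for all ω ∈ ℝ. -/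
open Complex Matrix Finset
open scoped ComplexOrder

/-- Elementary Toeplitz matrix: ones on the `k`-th lower diagonal. -/
noncomputable def theta (n : ℕ) (k : Fin n) : Matrix (Fin n) (Fin n) ℂ :=
  Matrix.of fun i j => if (i : ℤ) - (j : ℤ) = (k : ℤ) then 1 else 0

/-- The block matrix `[[H, q], [qᴴ, 1]]`. -/
noncomputable def blockMat {N : ℕ} (S : Matrix (Fin N) (Fin N) ℂ) (u : Fin N → ℂ) :
    Matrix (Fin N ⊕ Unit) (Fin N ⊕ Unit) ℂ :=
  Matrix.of fun i j =>
    match i, j with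
    | Sum.inl a, Sum.inl b => S a b
    | Sum.inl a, Sum.inr _ => u a
    | Sum.inr _, Sum.inl b => star (u b)
    | Sum.inr _, Sum.inr _ => 1

/-- bounded real lemma, sufficiency. If there is a Hermitian `H` with
`[[H, q],[qᴴ,1]] ⪰ 0` and `tr(Θ_k H) = δ_{k,0}`, then `|Q(e^{iω})| ≤ 1` for all `ω`. -/
theorem bounded_real_lemma_sufficient
    (n : ℕ) (q : Fin (n + 1) → ℂ)
    (H : Matrix (Fin (n + 1)) (Fin (n + 1)) ℂ)
    (hH : H.IsHermitian)
    (hblk : (blockMat H q).PosSemidef)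
    (htr : ∀ k : Fin (n + 1),
      (theta (n + 1) k * H).trace = if (k : ℕ) = 0 then 1 else 0) :
    ∀ ω : ℝ,
      ‖(∑ k : Fin (n + 1),
        q k * Complex.exp (Complex.I * (ω : ℂ)) ^ (k : ℕ))‖ ≤ 1 := by
  intro ω
  set z : ℂ := Complex.exp (Complex.I * (ω : ℂ)) with hz
  set Q : ℂ := ∑ k : Fin (n + 1), q k * z ^ (k : ℕ) with hQdef
  -- z * star z = 1
  have hzs : z * star z = 1 := by
    rw [hz, Complex.star_def, ← Complex.exp_conj, ← Complex.exp_add]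
    have : Complex.I * (ω : ℂ) + (starRingEnd ℂ) (Complex.I * (ω : ℂ)) = 0 := by
      simp [Complex.conj_I]
    rw [this, Complex.exp_zero]
  -- key lemma
  have key : ∀ w : ℂ, ∑ i : Fin (n+1), ∑ j : Fin (n+1),
      (if (j:ℕ) ≤ (i:ℕ) then w ^ ((i:ℕ) - (j:ℕ)) * H j i else 0) = 1 := by
    intro w
    have h1 : ∑ k : Fin (n+1), w^(k:ℕ) * (theta (n + 1) k * H).trace = 1 := by
      simp only [htr, mul_ite, mul_one, mul_zero]
      rw [Finset.sum_eq_single (0 : Fin (n+1))]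
      · simp
      · intro k _ hk
        rw [if_neg]
        exact fun h => hk (Fin.ext (by simp [h]))
      · simp
    have h2 : ∀ k : Fin (n+1), w^(k:ℕ) * (theta (n + 1) k * H).trace
        = ∑ i : Fin (n+1), ∑ j : Fin (n+1),
          (if (i:ℤ)-(j:ℤ)=((k:ℕ):ℤ) then w^(k:ℕ) * H j i else 0) := by
      intro k
      simp [Matrix.trace, Matrix.diag, Matrix.mul_apply, theta, ite_mul,
        Finset.mul_sum, mul_ite]
    rw [← h1]
    simp only [h2]
    conv_rhs => rw [Finset.sum_comm]
    symm
    refine Finset.sum_congr rfl fun i _ => ?_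
    conv_lhs => rw [Finset.sum_comm]
    symm
    refine Finset.sum_congr rfl fun j _ => ?_
    symm
    by_cases hji : (j:ℕ) ≤ (i:ℕ)
    · rw [if_pos hji, Finset.sum_eq_single (⟨(i:ℕ) - (j:ℕ), by omega⟩ : Fin (n+1))]
      · rw [if_pos (by simp; omega)]
      · intro k _ hk
        rw [if_neg]
        intro hc
        apply hk
        apply Fin.ext
        simp
        omega
      · simp
    · rw [if_neg hji]
      apply Finset.sum_eq_zero
      intro k _
      rw [if_neg]
      omega
  -- diagonal sum is 1
  have hdiag : ∑ a : Fin (n+1), H a a = 1 := by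
    have h0 := key 0
    rw [← h0]
    refine Finset.sum_congr rfl fun i _ => ?_
    rw [Finset.sum_eq_single i]
    · simp
    · intro j _ hj
      by_cases hji : (j:ℕ) ≤ (i:ℕ)
      · rw [if_pos hji, zero_pow (by omega : (i:ℕ) - (j:ℕ) ≠ 0), zero_mul]
      · rw [if_neg hji]
    · simp
  -- strict upper part is 0
  have hupper : ∀ w : ℂ, ∑ a : Fin (n+1), ∑ b : Fin (n+1),
      (if (a:ℕ) < (b:ℕ) then w ^ ((b:ℕ) - (a:ℕ)) * H a b else 0) = 0 := by
    intro w
    have h := key w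
    rw [Finset.sum_comm] at h
    have hsplit : ∀ a b : Fin (n+1),
        (if (a:ℕ) ≤ (b:ℕ) then w ^ ((b:ℕ) - (a:ℕ)) * H a b else 0)
        = (if (a:ℕ) < (b:ℕ) then w ^ ((b:ℕ) - (a:ℕ)) * H a b else 0)
          + (if a = b then w ^ ((b:ℕ) - (a:ℕ)) * H a b else 0) := by
      intro a b
      simp only [Fin.ext_iff]
      split_ifs <;> (try (exfalso; omega)) <;> ring
    simp only [hsplit, Finset.sum_add_distrib] at h
    have hdiag2 : ∑ a : Fin (n+1), ∑ b : Fin (n+1),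
        (if a = b then w ^ ((b:ℕ) - (a:ℕ)) * H a b else 0) = 1 := by
      rw [← hdiag]
      refine Finset.sum_congr rfl fun a _ => ?_
      rw [Finset.sum_eq_single a] <;> simp +contextual [eq_comm]
    rw [hdiag2] at h
    linear_combination h
  -- the quadratic form of H at the unit-circle vector is 1
  have hherm : ∀ a b : Fin (n+1), H a b = star (H b a) := by
    intro a b
    conv_lhs => rw [← hH]
    rfl
  have hpow : ∀ a b : Fin (n+1), (b:ℕ) ≤ (a:ℕ) →
      z ^ (a:ℕ) * (star z) ^ (b:ℕ) = z ^ ((a:ℕ) - (b:ℕ)) := by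
    intro a b hba
    have : z ^ (a:ℕ) = z ^ ((a:ℕ) - (b:ℕ)) * z ^ (b:ℕ) := by
      rw [← pow_add]; congr 1; omega
    rw [this, mul_assoc, ← mul_pow, hzs, one_pow, mul_one]
  have hS : ∑ a : Fin (n+1), ∑ b : Fin (n+1),
      z ^ (a:ℕ) * (star z) ^ (b:ℕ) * H a b = 1 := by
    have hdecomp : ∀ a b : Fin (n+1), z ^ (a:ℕ) * (star z) ^ (b:ℕ) * H a b
        = (if (b:ℕ) ≤ (a:ℕ) then z ^ ((a:ℕ) - (b:ℕ)) * H a b else 0)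
          + (if (a:ℕ) < (b:ℕ) then (star z) ^ ((b:ℕ) - (a:ℕ)) * H a b else 0) := by
      intro a b
      by_cases hba : (b:ℕ) ≤ (a:ℕ)
      · rw [if_pos hba, if_neg (by omega), add_zero, hpow a b hba]
      · rw [if_neg hba, if_pos (by omega), zero_add]
        have hab : (a:ℕ) ≤ (b:ℕ) := by omega
        have := hpow b a hab
        have hcalc : z ^ (a:ℕ) * (star z) ^ (b:ℕ) = (star z) ^ ((b:ℕ) - (a:ℕ)) := by
          have hb : (b:ℕ) = ((b:ℕ) - (a:ℕ)) + (a:ℕ) := by omega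
          calc z ^ (a:ℕ) * (star z) ^ (b:ℕ)
              = z ^ (a:ℕ) * ((star z) ^ ((b:ℕ) - (a:ℕ)) * (star z) ^ (a:ℕ)) := by
                rw [← pow_add, ← hb]
            _ = (star z) ^ ((b:ℕ) - (a:ℕ)) * (z * star z) ^ (a:ℕ) := by
                rw [mul_pow]; ring
            _ = (star z) ^ ((b:ℕ) - (a:ℕ)) := by rw [hzs, one_pow, mul_one]
        rw [hcalc]
    simp only [hdecomp, Finset.sum_add_distrib]
    rw [hupper (star z), add_zero]
    calc ∑ a : Fin (n+1), ∑ b : Fin (n+1),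
          (if (b:ℕ) ≤ (a:ℕ) then z ^ ((a:ℕ)-(b:ℕ)) * H a b else 0)
        = ∑ a : Fin (n+1), ∑ b : Fin (n+1),
            star (if (b:ℕ) ≤ (a:ℕ) then (star z) ^ ((a:ℕ)-(b:ℕ)) * H b a else 0) := by
          refine Finset.sum_congr rfl fun a _ => Finset.sum_congr rfl fun b _ => ?_
          by_cases hba : (b:ℕ) ≤ (a:ℕ)
          · rw [if_pos hba, if_pos hba, star_mul', star_pow, star_star, ← hherm a b]
          · simp [hba]
      _ = star (∑ i : Fin (n+1), ∑ j : Fin (n+1),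
            (if (j:ℕ) ≤ (i:ℕ) then (star z) ^ ((i:ℕ)-(j:ℕ)) * H j i else 0)) := by
          simp
      _ = 1 := by rw [key (star z)]; exact star_one ℂ
  -- quadratic form with augmented vector
  have habs : ∀ c : ℂ, (0:ℂ) ≤ 1 + c * Q + star (c * Q) + star c * c := by
    intro c
    set x : Fin (n+1) ⊕ Unit → ℂ := Sum.elim (fun a => star (z ^ (a:ℕ))) (fun _ => c) with hx
    have hq := hblk.dotProduct_mulVec_nonneg x
    have hform : star x ⬝ᵥ (blockMat H q) *ᵥ x = 1 + c * Q + star (c * Q) + star c * c := by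
      simp only [dotProduct, Matrix.mulVec, blockMat, Fintype.sum_sum_type,
        Finset.univ_unique, Finset.sum_singleton, Sum.elim_inl, Sum.elim_inr,
        Pi.star_apply, Matrix.of_apply, star_star, hx]
      have e1 : ∑ a : Fin (n+1), z ^ (a:ℕ) * (∑ b : Fin (n+1), H a b * star (z ^ (b:ℕ))) = 1 := by
        rw [← hS]
        refine Finset.sum_congr rfl fun a _ => ?_
        rw [Finset.mul_sum]
        refine Finset.sum_congr rfl fun b _ => ?_
        rw [star_pow]; ring
      have e2 : ∑ a : Fin (n+1), z ^ (a:ℕ) * (q a * c)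
          = c * (∑ k : Fin (n+1), q k * z ^ (k:ℕ)) := by
        rw [Finset.mul_sum]; exact Finset.sum_congr rfl fun a _ => by ring
      have e3 : ∑ a : Fin (n+1), star (q a) * star (z ^ (a:ℕ))
          = star (∑ k : Fin (n+1), q k * z ^ (k:ℕ)) := by
        rw [star_sum]
        exact Finset.sum_congr rfl fun a _ => (star_mul' _ _).symm
      simp only [mul_add, Finset.sum_add_distrib, one_mul]
      rw [e1, e2, e3, ← hQdef, star_mul']
      ring
    rwa [hform] at hq
  -- conclude
  by_cases hQ0 : Q = 0
  · rw [hQ0]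
    simp
  · set r : ℝ := ‖Q‖ with hr
    have hrpos : 0 < r := by simpa [hr] using norm_pos_iff.mpr hQ0
    have hrne : ((r:ℝ):ℂ) ≠ 0 := by exact_mod_cast ne_of_gt hrpos
    have hsq : star Q * Q = ((r:ℝ):ℂ)^2 := by
      rw [Complex.star_def, mul_comm, Complex.mul_conj]
      norm_cast
      rw [← Complex.sq_norm]
    have h := habs (-(star Q) / ((r:ℝ):ℂ))
    have hcQ : (-(star Q) / ((r:ℝ):ℂ)) * Q = -((r:ℝ):ℂ) := by
      simp only [Complex.star_def] at hsq ⊢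
      field_simp
      linear_combination -hsq
    have hstarc : star (-(star Q) / ((r:ℝ):ℂ)) = -Q / ((r:ℝ):ℂ) := by
      simp [Complex.star_def, map_div₀, Complex.conj_ofReal]
    have hcc : star (-(star Q) / ((r:ℝ):ℂ)) * (-(star Q) / ((r:ℝ):ℂ)) = 1 := by
      rw [hstarc]
      simp only [Complex.star_def] at hsq ⊢
      field_simp
      linear_combination hsq
    rw [hcQ, hcc] at h
    have heq : (1 : ℂ) + -((r:ℝ):ℂ) + star (-((r:ℝ):ℂ)) + 1 = (((2 - 2*r : ℝ)):ℂ) := by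
      simp only [star_neg, Complex.star_def, Complex.conj_ofReal]
      push_cast; ring
    rw [heq] at h
    have hreal : (0:ℝ) ≤ 2 - 2*r := by
      exact_mod_cast Complex.zero_le_real.mp h
    linarith
end

section
/- (Sparse bounded real lemma, sufficient direction.) Let I ⊆ {0,...,n} with selection matrix C_I, let u ∈ ℂ^{|I|} and set q = C_I u, Q(z) = Σ_k q_k z^k. Let P be a polynomial supported on I with |P(e^{iω})|² = R(e^{iω}) and r the coefficient vector of R as above. If there exists a Hermitian S ∈ ℂ^{|I|×|I|} with [[S, u],[u^H, 1]] ⪰ 0 and tr(Θ_k C_I S C_I^H) = r_k for all k ∈ {0,...,n}, then |Q(e^{iω})| ≤ |P(e^{iω})| for all ω ∈ ℝ. -/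
open Complex Matrix Finset ComplexConjugate
open scoped ComplexOrder

/-- Selection matrix `C_I` for `I = {e 0 < ... < e (N-1)} ⊆ {0,...,n}`. -/
noncomputable def selMat {n N : ℕ} (e : Fin N → Fin (n + 1)) :
    Matrix (Fin (n + 1)) (Fin N) ℂ :=
  Matrix.of fun i j => if i = e j then 1 else 0

/-! ### Auxiliary machinery -/

noncomputable def Eexp (ω : ℝ) (d : ℤ) : ℂ := Complex.exp (Complex.I * d * ω)

noncomputable def Tdiag (n : ℕ) (M : Matrix (Fin (n+1)) (Fin (n+1)) ℂ) (d : ℤ) : ℂ :=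
  ∑ a : Fin (n+1), ∑ b : Fin (n+1), if ((b:ℤ) - (a:ℤ)) = d then M a b else 0

lemma Eexp_conj (ω : ℝ) (d : ℤ) : conj (Eexp ω d) = Eexp ω (-d) := by
  rw [Eexp, Eexp, ← Complex.exp_conj]
  push_cast
  ring_nf
  simp [Complex.conj_ofReal]

lemma Eexp_add (ω : ℝ) (c d : ℤ) : Eexp ω (c + d) = Eexp ω c * Eexp ω d := by
  rw [Eexp, Eexp, Eexp, ← Complex.exp_add]
  congr 1
  push_cast
  ring

lemma Eexp_neg_nat (ω : ℝ) (k : ℕ) :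
    Eexp ω (-(k:ℤ)) = Complex.exp (-(Complex.I * (k:ℂ) * ω)) := by
  rw [Eexp]; congr 1; push_cast; ring

lemma Eexp_nat (ω : ℝ) (k : ℕ) :
    Eexp ω (k:ℤ) = Complex.exp (Complex.I * (k:ℂ) * ω) := by
  rw [Eexp]; norm_cast

lemma inner_sum_aux (n : ℕ) (ω : ℝ) (d : ℤ) (h1 : -(n:ℤ) ≤ d) (h2 : d ≤ n) :
    ((if d = 0 then (1:ℂ) else 0)
      + ∑ k ∈ Finset.Icc 1 n, ((if d = (k:ℤ) then Eexp ω (-(k:ℤ)) else 0)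
          + (if d = -(k:ℤ) then Eexp ω k else 0)))
    = Eexp ω (-d) := by
  rcases lt_trichotomy d 0 with hd | hd | hd
  · rw [if_neg hd.ne, Finset.sum_eq_single d.natAbs]
    · have : d = -(d.natAbs : ℤ) := by omega
      rw [if_neg (by omega), if_pos this, show -d = (d.natAbs:ℤ) by omega]
      ring
    · intro k hk hne
      rw [if_neg (by omega), if_neg (by simp at hne ⊢; omega)]
      ring
    · intro hmem
      simp only [Finset.mem_Icc] at hmem
      omega
  · subst hd
    rw [if_pos rfl, Finset.sum_eq_zero, add_zero]
    · simp [Eexp]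
    · intro k hk
      simp only [Finset.mem_Icc] at hk
      rw [if_neg (by omega), if_neg (by omega)]
      ring
  · rw [if_neg hd.ne', Finset.sum_eq_single d.natAbs]
    · have : d = (d.natAbs : ℤ) := by omega
      rw [if_pos this, if_neg (by omega), show -d = -(d.natAbs:ℤ) by omega]
      ring
    · intro k hk hne
      rw [if_neg (by simp at hne ⊢; omega), if_neg (by omega)]
      ring
    · intro hmem
      simp only [Finset.mem_Icc] at hmem
      omega

lemma trace_theta (n : ℕ) (k : Fin (n+1)) (M : Matrix (Fin (n+1)) (Fin (n+1)) ℂ) :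
    (theta (n+1) k * M).trace = Tdiag n M (k : ℤ) := by
  rw [Matrix.trace]
  simp only [Matrix.diag, Matrix.mul_apply, theta, Matrix.of_apply, ite_mul, one_mul, zero_mul]
  rw [Finset.sum_comm, Tdiag]

lemma tdiag_conj (n : ℕ) (M : Matrix (Fin (n+1)) (Fin (n+1)) ℂ) (hM : M.IsHermitian)
    (d : ℤ) : Tdiag n M (-d) = conj (Tdiag n M d) := by
  rw [Tdiag, Tdiag, map_sum, Finset.sum_comm]
  refine Finset.sum_congr rfl fun a _ => ?_
  rw [map_sum]
  refine Finset.sum_congr rfl fun b _ => ?_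
  rw [apply_ite conj, map_zero]
  refine if_congr (by omega) ?_ rfl
  exact (hM.apply b a).symm

lemma middle (n : ℕ) (M : Matrix (Fin (n+1)) (Fin (n+1)) ℂ) (hM : M.IsHermitian)
    (r : ℕ → ℂ)
    (htr : ∀ k : Fin (n + 1), (theta (n + 1) k * M).trace = r (k : ℕ)) (ω : ℝ) :
    (∑ a : Fin (n+1), ∑ b : Fin (n+1), M a b * Eexp ω ((a:ℤ) - (b:ℤ)))
      = r 0 + ∑ k ∈ Finset.Icc 1 n,
          (r k * Complex.exp (-(Complex.I * (k : ℂ) * (ω : ℂ)))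
            + conj (r k) * Complex.exp (Complex.I * (k : ℂ) * (ω : ℂ))) := by
  have hT : ∀ k : ℕ, k ≤ n → Tdiag n M (k:ℤ) = r k := by
    intro k hk
    have h := htr ⟨k, by omega⟩
    rw [trace_theta] at h
    exact h
  symm
  calc r 0 + ∑ k ∈ Finset.Icc 1 n,
          (r k * Complex.exp (-(Complex.I * (k : ℂ) * (ω : ℂ)))
            + conj (r k) * Complex.exp (Complex.I * (k : ℂ) * (ω : ℂ)))
      = Tdiag n M 0 + ∑ k ∈ Finset.Icc 1 n,
          (Tdiag n M (k:ℤ) * Eexp ω (-(k:ℤ)) + Tdiag n M (-(k:ℤ)) * Eexp ω (k:ℤ)) := by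
        rw [show ((0:ℤ) = ((0:ℕ):ℤ)) by norm_num, hT 0 n.zero_le]
        refine congrArg _ (Finset.sum_congr rfl fun k hk => ?_)
        rw [Finset.mem_Icc] at hk
        rw [hT k hk.2, tdiag_conj n M hM, hT k hk.2, Eexp_neg_nat, Eexp_nat]
    _ = ∑ k ∈ Finset.Icc 1 n, ∑ a : Fin (n+1), ∑ b : Fin (n+1),
          M a b * ((if ((b:ℤ) - (a:ℤ)) = (k:ℤ) then Eexp ω (-(k:ℤ)) else 0)
            + (if ((b:ℤ) - (a:ℤ)) = -(k:ℤ) then Eexp ω (k:ℤ) else 0))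
        + Tdiag n M 0 := by
        rw [add_comm]
        congr 1
        refine Finset.sum_congr rfl fun k hk => ?_
        rw [Tdiag, Tdiag, Finset.sum_mul, Finset.sum_mul, ← Finset.sum_add_distrib]
        refine Finset.sum_congr rfl fun a _ => ?_
        rw [Finset.sum_mul, Finset.sum_mul, ← Finset.sum_add_distrib]
        refine Finset.sum_congr rfl fun b _ => ?_
        split_ifs <;> ring
    _ = ∑ a : Fin (n+1), ∑ b : Fin (n+1),
          (∑ k ∈ Finset.Icc 1 n,
            M a b * ((if ((b:ℤ) - (a:ℤ)) = (k:ℤ) then Eexp ω (-(k:ℤ)) else 0)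
              + (if ((b:ℤ) - (a:ℤ)) = -(k:ℤ) then Eexp ω (k:ℤ) else 0)))
        + Tdiag n M 0 := by
        rw [Finset.sum_comm]
        congr 1
        exact Finset.sum_congr rfl fun a _ => Finset.sum_comm
    _ = ∑ a : Fin (n+1), ∑ b : Fin (n+1), M a b * Eexp ω ((a:ℤ) - (b:ℤ)) := by
        rw [Tdiag, ← Finset.sum_add_distrib]
        refine Finset.sum_congr rfl fun a _ => ?_
        rw [← Finset.sum_add_distrib]
        refine Finset.sum_congr rfl fun b _ => ?_
        have hb := b.is_lt
        have ha := a.is_lt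
        have key := inner_sum_aux n ω ((b:ℤ) - (a:ℤ)) (by omega) (by omega)
        calc (∑ k ∈ Finset.Icc 1 n,
                M a b * ((if ((b:ℤ) - (a:ℤ)) = (k:ℤ) then Eexp ω (-(k:ℤ)) else 0)
                  + (if ((b:ℤ) - (a:ℤ)) = -(k:ℤ) then Eexp ω (k:ℤ) else 0)))
              + (if ((b:ℤ) - (a:ℤ)) = 0 then M a b else 0)
            = M a b * ((if ((b:ℤ) - (a:ℤ)) = 0 then (1:ℂ) else 0)
                + ∑ k ∈ Finset.Icc 1 n, ((if ((b:ℤ) - (a:ℤ)) = (k:ℤ) then Eexp ω (-(k:ℤ)) else 0)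
                  + (if ((b:ℤ) - (a:ℤ)) = -(k:ℤ) then Eexp ω (k:ℤ) else 0))) := by
              rw [mul_add, Finset.mul_sum, add_comm]
              congr 1
              split_ifs <;> ring
          _ = M a b * Eexp ω (-((b:ℤ) - (a:ℤ))) := by rw [key]
          _ = M a b * Eexp ω ((a:ℤ) - (b:ℤ)) := by
              congr 1
              ring_nf

lemma dot_expand {m : Type*} [Fintype m] (M : Matrix m m ℂ) (v : m → ℂ) :
    star v ⬝ᵥ (M *ᵥ v) = ∑ a, ∑ b, conj (v a) * M a b * v b := by
  simp [dotProduct, Matrix.mulVec, Finset.mul_sum, mul_assoc]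

lemma sel_mulVec {n N : ℕ} (e : Fin N → Fin (n + 1)) (v : Fin (n+1) → ℂ) :
    (selMat e)ᴴ *ᵥ v = fun j => v (e j) := by
  funext j
  simp [Matrix.mulVec, dotProduct, Matrix.conjTranspose_apply, selMat,
    apply_ite (star : ℂ → ℂ)]

theorem sparse_brl_sufficient
    (n N : ℕ) (e : Fin N → Fin (n + 1)) (he : StrictMono e)
    (u : Fin N → ℂ) (q : Fin (n + 1) → ℂ) (hq : q = (selMat e).mulVec u)
    (p : Fin (n + 1) → ℂ) (hsupp : ∀ i : Fin (n + 1), (∀ j, e j ≠ i) → p i = 0)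
    (r : ℕ → ℂ)
    (hR : ∀ ω : ℝ,
      ((‖∑ k : Fin (n + 1),
          p k * Complex.exp (Complex.I * (ω : ℂ)) ^ (k : ℕ)‖) ^ 2 : ℂ)
        = r 0 + ∑ k ∈ Finset.Icc 1 n,
            (r k * Complex.exp (-(Complex.I * (k : ℂ) * (ω : ℂ)))
              + conj (r k) * Complex.exp (Complex.I * (k : ℂ) * (ω : ℂ))))
    (S : Matrix (Fin N) (Fin N) ℂ) (hS : S.IsHermitian)
    (hblk : (blockMat S u).PosSemidef)
    (htr : ∀ k : Fin (n + 1),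
      (theta (n + 1) k * (selMat e * S * (selMat e)ᴴ)).trace = r (k : ℕ)) :
    ∀ ω : ℝ,
      ‖∑ k : Fin (n + 1),
          q k * Complex.exp (Complex.I * (ω : ℂ)) ^ (k : ℕ)‖
        ≤ ‖∑ k : Fin (n + 1),
            p k * Complex.exp (Complex.I * (ω : ℂ)) ^ (k : ℕ)‖ := by
  intro ω
  set M : Matrix (Fin (n+1)) (Fin (n+1)) ℂ := selMat e * S * (selMat e)ᴴ with hM_def
  have hM : M.IsHermitian := Matrix.isHermitian_mul_mul_conjTranspose (selMat e) hS
  set v : Fin (n+1) → ℂ := fun a => Eexp ω (-(a:ℤ)) with hv_def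
  set w : Fin N → ℂ := fun j => Eexp ω (-((e j : ℕ) : ℤ)) with hw_def
  have hzpow : ∀ m : ℕ, Complex.exp (Complex.I * (ω:ℂ)) ^ m = Eexp ω (m:ℤ) := by
    intro m
    rw [← Complex.exp_nat_mul, Eexp]
    congr 1
    push_cast
    ring
  -- the quadratic form chain
  have hCw : (selMat e)ᴴ *ᵥ v = w := by
    rw [sel_mulVec]
  have hquad : star w ⬝ᵥ (S *ᵥ w) = star v ⬝ᵥ (M *ᵥ v) := by
    rw [hM_def, ← Matrix.mulVec_mulVec, ← Matrix.mulVec_mulVec,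
      Matrix.dotProduct_mulVec (star v) (selMat e), ← hCw]
    congr 1
    rw [Matrix.star_mulVec]
    simp
  have hvMv : star v ⬝ᵥ (M *ᵥ v)
      = ∑ a : Fin (n+1), ∑ b : Fin (n+1), M a b * Eexp ω ((a:ℤ) - (b:ℤ)) := by
    rw [dot_expand]
    refine Finset.sum_congr rfl fun a _ => Finset.sum_congr rfl fun b _ => ?_
    rw [hv_def]
    simp only []
    rw [Eexp_conj, neg_neg, show (a:ℤ) - (b:ℤ) = (a:ℤ) + -(b:ℤ) by ring, Eexp_add]
    ring
  have hP : star w ⬝ᵥ (S *ᵥ w)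
      = ((‖∑ k : Fin (n + 1),
          p k * Complex.exp (Complex.I * (ω : ℂ)) ^ (k : ℕ)‖) ^ 2 : ℂ) := by
    rw [hquad, hvMv, middle n M hM r htr ω, ← hR ω]
  -- Q as a dot product
  set Qc : ℂ := ∑ j : Fin N, conj (w j) * u j with hQc_def
  have hQ : (∑ k : Fin (n + 1), q k * Complex.exp (Complex.I * (ω:ℂ)) ^ (k : ℕ)) = Qc := by
    rw [hq, hQc_def]
    simp only [Matrix.mulVec, dotProduct, selMat, Matrix.of_apply, Finset.sum_mul]
    rw [Finset.sum_comm]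
    refine Finset.sum_congr rfl fun j _ => ?_
    rw [Finset.sum_eq_single (e j)]
    · rw [if_pos rfl, hw_def]
      simp only []
      rw [Eexp_conj, neg_neg, hzpow]
      ring
    · intro k _ hne
      rw [if_neg hne]
      ring
    · intro h
      exact absurd (Finset.mem_univ _) h
  -- positivity
  have h0 := hblk.dotProduct_mulVec_nonneg (Sum.elim w (fun _ => -conj Qc))
  have hval : star (Sum.elim w (fun _ => -conj Qc)) ⬝ᵥ
      (blockMat S u *ᵥ (Sum.elim w (fun _ => -conj Qc)))
      = star w ⬝ᵥ (S *ᵥ w) - Qc * conj Qc := by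
    have hsplit : ∀ i : Fin N ⊕ Unit,
        (blockMat S u *ᵥ (Sum.elim w (fun _ => -conj Qc))) i
        = Sum.elim (fun a => (∑ b, S a b * w b) + u a * (-conj Qc))
            (fun _ => (∑ b, conj (u b) * w b) + (-conj Qc)) i := by
      intro i
      cases i with
      | inl a =>
        simp [Matrix.mulVec, dotProduct, blockMat, Fintype.sum_sum_type]
      | inr _ =>
        simp [Matrix.mulVec, dotProduct, blockMat, Fintype.sum_sum_type,
          Complex.star_def]
    have hconjQc : (∑ b : Fin N, conj (u b) * w b) = conj Qc := by
      rw [hQc_def, map_sum]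
      refine Finset.sum_congr rfl fun b _ => ?_
      rw [_root_.map_mul, Complex.conj_conj]
      ring
    have expand1 : ∑ a : Fin N, conj (w a) * ((∑ b, S a b * w b) + u a * (-conj Qc))
        = (∑ a : Fin N, ∑ b : Fin N, conj (w a) * S a b * w b) + Qc * (-conj Qc) := by
      simp only [mul_add, Finset.sum_add_distrib]
      congr 1
      · refine Finset.sum_congr rfl fun a _ => ?_
        rw [Finset.mul_sum]
        exact Finset.sum_congr rfl fun b _ => by ring
      · simp only [← mul_assoc]
        rw [← Finset.sum_mul, ← hQc_def]
    rw [dotProduct, Fintype.sum_sum_type]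
    simp only [hsplit, Sum.elim_inl, Sum.elim_inr, Pi.star_apply, Complex.star_def,
      map_neg, Complex.conj_conj, Finset.univ_unique, Finset.sum_singleton]
    rw [hconjQc, dot_expand, expand1]
    ring
  rw [hval] at h0
  have hle : Qc * conj Qc ≤ star w ⬝ᵥ (S *ᵥ w) := sub_nonneg.mp h0
  rw [hP] at hle
  have hQabs : Qc * conj Qc = ((‖Qc‖ : ℂ))^2 := by
    rw [Complex.mul_conj, ← Complex.sq_norm]
    push_cast
    ring
  rw [hQabs] at hle
  have hre : (‖Qc‖)^2
      ≤ (‖∑ k : Fin (n + 1),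
          p k * Complex.exp (Complex.I * (ω : ℂ)) ^ (k : ℕ)‖)^2 := by
    rw [← Complex.real_le_real]
    push_cast
    exact hle
  rw [hQ]
  exact (pow_le_pow_iff_left₀ (norm_nonneg _) (norm_nonneg _) two_ne_zero).mp hre
end
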